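/- Every symmetric unitary matrix A (i.e., A ∈ U(n) with Aᵀ = A) can be written as A = O D Oᵀ where O is a real orthogonal matrix and D is a diagonal unitary matrix. -/

import Mathlib

/-!
Split `A = X + iY` into its entrywise real and imaginary parts. Since `A` is symmetric, `X` and `Y`
are real symmetric matrices and they are the Hermitian real and imaginary parts of `A`; since `A`
is unitary, hence normal, they commute. A real orthogonal `O` diagonalizes both simultaneously,
`X O = O diag μ` and `Y O = O diag ν`, so `A O = O diag (μ + iν)`. Finally `diag (μ + iν) = Oᵀ A O`
is unitary, so its entries are unimodular.
-/

open Matrix Module Module.End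
open scoped ComplexStarModule

theorem LinearMap.IsSymmetric.exists_orthonormalBasis_eigenvectors_of_commute
    {𝕜 E ι : Type*} [RCLike 𝕜] [NormedAddCommGroup E] [InnerProductSpace 𝕜 E]
    [FiniteDimensional 𝕜 E] [Fintype ι] (hι : finrank 𝕜 E = Fintype.card ι)
    {S T : E →ₗ[𝕜] E} (hS : S.IsSymmetric) (hT : T.IsSymmetric) (hST : Commute S T) :
    ∃ (b : OrthonormalBasis ι 𝕜 E) (μ ν : ι → 𝕜),
      ∀ i, S (b i) = μ i • b i ∧ T (b i) = ν i • b i := by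
  classical
  set V : 𝕜 × 𝕜 → Submodule 𝕜 E := fun p => eigenspace S p.2 ⊓ eigenspace T p.1
  have hV : DirectSum.IsInternal V := hS.directSum_isInternal_of_commute hT hST
  -- `subordinateOrthonormalBasis` needs a finite index type: keep only the nonzero joint eigenspaces
  have : Fintype {p // V p ≠ ⊥} := hV.submodule_iSupIndep.fintypeNeBotOfFiniteDimensional
  have hV' : DirectSum.IsInternal fun p : {p // V p ≠ ⊥} => V p :=
    DirectSum.isInternal_ne_bot_iff.mpr hV
  have hVo : OrthogonalFamily 𝕜 (fun p : {p // V p ≠ ⊥} => V p) fun p => (V p).subtypeₗᵢ :=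
    (hS.orthogonalFamily_eigenspace_inf_eigenspace hT).comp Subtype.val_injective
  let e := Fintype.equivFin ι
  let eigenvalues i := (hV'.subordinateOrthonormalBasisIndex hι (e i) hVo).val
  refine ⟨(hV'.subordinateOrthonormalBasis hι hVo).reindex e.symm, fun i => (eigenvalues i).2,
    fun i => (eigenvalues i).1, fun i => ?_⟩
  have hmem := hV'.subordinateOrthonormalBasis_subordinate hι (e i) hVo
  simp only [OrthonormalBasis.reindex_apply, Equiv.symm_symm]
  exact ⟨mem_eigenspace_iff.mp hmem.1, mem_eigenspace_iff.mp hmem.2⟩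

namespace Matrix

variable {n : Type*}

section Diagonalization

variable [Fintype n] [DecidableEq n]

theorem mul_eq_mul_diagonal_of_mulVec_eq_smul {α : Type*} [CommSemiring α] {A U : Matrix n n α}
    {μ : n → α} (h : ∀ j, A *ᵥ Uᵀ j = μ j • Uᵀ j) : A * U = U * diagonal μ := by
  ext i j
  rw [mul_diagonal]
  simpa [mul_comm, mulVec, dotProduct, mul_apply] using congrFun (h j) i

theorem IsHermitian.exists_unitary_mul_eq_mul_diagonal_of_commute {𝕜 : Type*} [RCLike 𝕜]
    {A B : Matrix n n 𝕜} (hA : A.IsHermitian) (hB : B.IsHermitian) (hAB : Commute A B) :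
    ∃ U ∈ unitaryGroup n 𝕜, ∃ μ ν : n → 𝕜,
      A * U = U * diagonal μ ∧ B * U = U * diagonal ν := by
  obtain ⟨b, μ, ν, hb⟩ := LinearMap.IsSymmetric.exists_orthonormalBasis_eigenvectors_of_commute
    finrank_euclideanSpace (isSymmetric_toEuclideanLin_iff.mpr hA)
    (isSymmetric_toEuclideanLin_iff.mpr hB) (hAB.map (toLpLinAlgEquiv 2))
  -- the columns of `U` are the vectors `b j`
  refine ⟨(EuclideanSpace.basisFun n 𝕜).toBasis.toMatrix b.toBasis,
    (EuclideanSpace.basisFun n 𝕜).toMatrix_orthonormalBasis_mem_unitary b, μ, ν, ?_, ?_⟩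
  · exact mul_eq_mul_diagonal_of_mulVec_eq_smul fun j => congrArg WithLp.ofLp (hb j).1
  · exact mul_eq_mul_diagonal_of_mulVec_eq_smul fun j => congrArg WithLp.ofLp (hb j).2

theorem diagonal_mem_unitaryGroup_iff {α : Type*} [CommRing α] [StarRing α] {d : n → α} :
    diagonal d ∈ unitaryGroup n α ↔ ∀ i, d i ∈ unitary α := by
  simp only [mem_unitaryGroup_iff', Unitary.mem_iff_star_mul_self, star_eq_conjTranspose,
    diagonal_conjTranspose, diagonal_mul_diagonal, diagonal_eq_one, funext_iff]
  rfl

end Diagonalization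

section RealAndImaginaryParts

open Complex

theorem map_re_add_I_smul_map_im (A : Matrix n n ℂ) :
    (A.map re).map (↑) + I • (A.map im).map (↑) = A := by
  ext i j
  simp only [add_apply, smul_apply, map_apply, smul_eq_mul]
  rw [mul_comm, re_add_im]

theorem coe_realPart_of_isSymm {A : Matrix n n ℂ} (hA : A.IsSymm) :
    (ℜ A : Matrix n n ℂ) = (A.map re).map (↑) := by
  ext i j
  simp only [realPart_apply_coe, smul_apply, add_apply, star_apply, hA.apply i j, RCLike.star_def,
    smul_add, real_smul, ofReal_inv, ofReal_ofNat, map_apply, re_eq_add_conj]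
  ring

theorem coe_imaginaryPart_of_isSymm {A : Matrix n n ℂ} (hA : A.IsSymm) :
    (ℑ A : Matrix n n ℂ) = (A.map im).map (↑) := by
  ext i j
  simp only [imaginaryPart_apply_coe, smul_apply, sub_apply, star_apply, hA.apply i j,
    RCLike.star_def, real_smul, ofReal_inv, ofReal_ofNat, smul_eq_mul, neg_mul, map_apply,
    im_eq_sub_conj]
  rw [div_eq_mul_inv, mul_inv, inv_I]
  ring

theorem star_map_ofReal (O : Matrix n n ℝ) : star (O.map ((↑) : ℝ → ℂ)) = (O.map (↑))ᵀ := by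
  ext i j
  simp

variable [Fintype n]

theorem map_ofReal_mul (M N : Matrix n n ℝ) :
    (M * N).map ((↑) : ℝ → ℂ) = M.map (↑) * N.map (↑) :=
  Matrix.map_mul (f := ofRealHom)

theorem map_ofReal_mem_unitaryGroup [DecidableEq n] {O : Matrix n n ℝ}
    (hO : O ∈ unitaryGroup n ℝ) : O.map ((↑) : ℝ → ℂ) ∈ unitaryGroup n ℂ := by
  rw [mem_unitaryGroup_iff'] at hO ⊢
  rw [star_eq_conjTranspose, ← conjTranspose_map _ fun r => (conj_ofReal r).symm,
    ← star_eq_conjTranspose, ← map_ofReal_mul, hO]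
  simp

theorem commute_map_re_map_im {A : Matrix n n ℂ} (hA : A.IsSymm) [IsStarNormal A] :
    Commute (A.map re) (A.map im) := by
  have h := Commute.realPart_imaginaryPart A
  rw [coe_realPart_of_isSymm hA, coe_imaginaryPart_of_isSymm hA] at h
  rw [commute_iff_eq] at h ⊢
  apply map_injective ofReal_injective
  simpa only [map_ofReal_mul] using h

theorem mul_map_ofReal_eq_mul_diagonal [DecidableEq n] {A : Matrix n n ℂ} {O : Matrix n n ℝ}
    {μ ν : n → ℝ} (hre : A.map re * O = O * diagonal μ) (him : A.map im * O = O * diagonal ν) :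
    A * O.map (↑) = O.map (↑) * diagonal fun i => μ i + I * ν i := by
  conv_lhs => rw [← map_re_add_I_smul_map_im A]
  rw [add_mul, smul_mul_assoc, ← map_ofReal_mul, ← map_ofReal_mul, hre, him, map_ofReal_mul,
    map_ofReal_mul, diagonal_map ofReal_zero, diagonal_map ofReal_zero, ← mul_smul_comm,
    ← mul_add, ← diagonal_smul, diagonal_add]
  rfl

end RealAndImaginaryParts

end Matrix

theorem symmetric_unitary_ODOt (n : ℕ) (A : Matrix (Fin n) (Fin n) ℂ)
    (hA : Aᴴ * A = 1) (hsym : Aᵀ = A) :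
    ∃ (O : Matrix (Fin n) (Fin n) ℝ) (d : Fin n → ℂ),
      Oᵀ * O = 1 ∧ (∀ i, ‖d i‖ = 1) ∧
      A = (O.map (Complex.ofReal)) * Matrix.diagonal d * (O.map (Complex.ofReal))ᵀ := by
  have hAu : A ∈ unitaryGroup (Fin n) ℂ := mem_unitaryGroup_iff'.mpr hA
  have := isStarNormal_of_mem_unitary hAu
  have hX : (A.map Complex.re).IsHermitian := isHermitian_iff_isSymm.mpr (IsSymm.map hsym _)
  have hY : (A.map Complex.im).IsHermitian := isHermitian_iff_isSymm.mpr (IsSymm.map hsym _)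
  obtain ⟨O, hO, μ, ν, hre, him⟩ :=
    hX.exists_unitary_mul_eq_mul_diagonal_of_commute hY (commute_map_re_map_im hsym)
  have hU := map_ofReal_mem_unitaryGroup hO
  set U := O.map ((↑) : ℝ → ℂ)
  set d : Fin n → ℂ := fun i => μ i + Complex.I * ν i
  have hAU : A * U = U * diagonal d := mul_map_ofReal_eq_mul_diagonal hre him
  have hd : diagonal d ∈ unitaryGroup (Fin n) ℂ := by
    have hdiag : diagonal d = star U * A * U := by
      rw [mul_assoc, hAU, ← mul_assoc, Unitary.star_mul_self_of_mem hU, one_mul]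
    rw [hdiag]
    exact mul_mem (mul_mem (Unitary.star_mem hU) hAu) hU
  refine ⟨O, d, ?_, fun i => CStarRing.norm_of_mem_unitary (diagonal_mem_unitaryGroup_iff.mp hd i),
    ?_⟩
  · simpa [mem_unitaryGroup_iff', star_eq_conjTranspose] using hO
  · rw [← star_map_ofReal, ← hAU, mul_assoc, Unitary.mul_star_self_of_mem hU, mul_one]
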